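/- Any morphism of Hopf quasigroups commutes with the antipodes: if f : H → B is a morphism of unital magmas and comonoids between Hopf quasigroups H and B, then λ_B ∘ f = f ∘ λ_H. -/
import Mathlib


open TensorProduct

noncomputable section

/-- A Hopf quasigroup over a commutative ring `R` (Klim–Majid), given by a unital magma
and comonoid structure on `H` whose counit and comultiplication are unital magma morphisms,
together with an antipode satisfying the four Hopf quasigroup identities. -/
structure HopfQuasigroup (R : Type*) [CommRing R] (H : Type*) [AddCommGroup H] [Module R H] :
    Type _ where
  mul : H ⊗[R] H →ₗ[R] H
  unit : H
  counit : H →ₗ[R] R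
  comul : H →ₗ[R] H ⊗[R] H
  antipode : H →ₗ[R] H
  mul_unit_left : ∀ h : H, mul (unit ⊗ₜ[R] h) = h
  mul_unit_right : ∀ h : H, mul (h ⊗ₜ[R] unit) = h
  coassoc : (TensorProduct.assoc R H H H).toLinearMap ∘ₗ comul.rTensor H ∘ₗ comul
      = comul.lTensor H ∘ₗ comul
  counit_left : (TensorProduct.lid R H).toLinearMap ∘ₗ counit.rTensor H ∘ₗ comul = LinearMap.id
  counit_right : (TensorProduct.rid R H).toLinearMap ∘ₗ counit.lTensor H ∘ₗ comul = LinearMap.id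
  counit_unit : counit unit = 1
  counit_mul : counit ∘ₗ mul
      = (TensorProduct.lid R R).toLinearMap ∘ₗ TensorProduct.map counit counit
  comul_unit : comul unit = unit ⊗ₜ[R] unit
  comul_mul : comul ∘ₗ mul = TensorProduct.map mul mul
      ∘ₗ (TensorProduct.tensorTensorTensorComm R H H H H).toLinearMap
      ∘ₗ TensorProduct.map comul comul
  antipode_lH₁ : mul ∘ₗ TensorProduct.map antipode mul
      ∘ₗ (TensorProduct.assoc R H H H).toLinearMap ∘ₗ comul.rTensor H
      = (TensorProduct.lid R H).toLinearMap ∘ₗ counit.rTensor H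
  antipode_lH₂ : mul ∘ₗ mul.lTensor H ∘ₗ (antipode.rTensor H).lTensor H
      ∘ₗ (TensorProduct.assoc R H H H).toLinearMap ∘ₗ comul.rTensor H
      = (TensorProduct.lid R H).toLinearMap ∘ₗ counit.rTensor H
  antipode_rH₁ : mul ∘ₗ mul.rTensor H ∘ₗ (TensorProduct.assoc R H H H).symm.toLinearMap
      ∘ₗ (antipode.rTensor H).lTensor H ∘ₗ comul.lTensor H
      = (TensorProduct.rid R H).toLinearMap ∘ₗ counit.lTensor H
  antipode_rH₂ : mul ∘ₗ TensorProduct.map mul antipode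
      ∘ₗ (TensorProduct.assoc R H H H).symm.toLinearMap ∘ₗ comul.lTensor H
      = (TensorProduct.rid R H).toLinearMap ∘ₗ counit.lTensor H

/-- A morphism of Hopf quasigroups (a morphism of unital magmas and of comonoids)
commutes with the antipodes: `λ_B ∘ f = f ∘ λ_H`. -/
theorem hopfQuasigroup_hom_antipode {R : Type*} [CommRing R] {H B : Type*}
    [AddCommGroup H] [Module R H] [AddCommGroup B] [Module R B]
    (hH : HopfQuasigroup R H) (hB : HopfQuasigroup R B) (f : H →ₗ[R] B)
    (hunit : f hH.unit = hB.unit)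
    (hmul : f ∘ₗ hH.mul = hB.mul ∘ₗ TensorProduct.map f f)
    (hcounit : hB.counit ∘ₗ f = hH.counit)
    (hcomul : TensorProduct.map f f ∘ₗ hH.comul = hB.comul ∘ₗ f) :
    hB.antipode ∘ₗ f = f ∘ₗ hH.antipode := by
  -- `h₁ S(h₂) = ε(h) 1` in `H`
  have L : hH.mul ∘ₗ TensorProduct.map hH.mul hH.antipode
      ∘ₗ (TensorProduct.assoc R H H H).symm.toLinearMap
      ∘ₗ TensorProduct.mk R H (H ⊗[R] H) hH.unit
      = hH.mul ∘ₗ hH.antipode.lTensor H := by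
    apply TensorProduct.ext'
    intro x y
    simp [hH.mul_unit_left]
  have lem1 : hH.mul ∘ₗ hH.antipode.lTensor H ∘ₗ hH.comul = hH.counit.smulRight hH.unit := by
    ext x
    have e := LinearMap.congr_fun hH.antipode_rH₂ (hH.unit ⊗ₜ[R] x)
    have e2 := LinearMap.congr_fun L (hH.comul x)
    simp only [LinearMap.comp_apply, LinearEquiv.coe_coe, LinearMap.lTensor_tmul,
      TensorProduct.mk_apply, TensorProduct.rid_tmul, LinearMap.smulRight_apply] at e e2 ⊢
    rw [← e2] at *
    rw [e]
  set g : H →ₗ[R] B := f ∘ₗ hH.antipode with hg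
  -- auxiliary map identities
  have a2 : (TensorProduct.lid R B).toLinearMap ∘ₗ hB.counit.rTensor B ∘ₗ TensorProduct.map f g
      = g ∘ₗ (TensorProduct.lid R H).toLinearMap ∘ₗ hH.counit.rTensor H := by
    apply TensorProduct.ext'
    intro a b
    have hc := LinearMap.congr_fun hcounit a
    simp only [LinearMap.comp_apply] at hc
    simp [hc]
  have b1 : hB.comul.rTensor B ∘ₗ TensorProduct.map f g
      = TensorProduct.map (TensorProduct.map f f) g ∘ₗ hH.comul.rTensor H := by
    apply TensorProduct.ext'
    intro a b
    have hc := LinearMap.congr_fun hcomul a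
    simp only [LinearMap.comp_apply] at hc
    simp [hc]
  have b3 : hB.mul ∘ₗ TensorProduct.map f g = f ∘ₗ hH.mul ∘ₗ hH.antipode.lTensor H := by
    apply TensorProduct.ext'
    intro a b
    have hm := LinearMap.congr_fun hmul (a ⊗ₜ[R] hH.antipode b)
    simp only [LinearMap.comp_apply, TensorProduct.map_tmul] at hm
    simp [hg, ← hm]
  have b4 : TensorProduct.map hB.antipode hB.mul ∘ₗ TensorProduct.map f (TensorProduct.map f g)
      = TensorProduct.map (hB.antipode ∘ₗ f) (f ∘ₗ hH.mul ∘ₗ hH.antipode.lTensor H) := by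
    rw [← TensorProduct.map_comp, b3]
  have b5 : TensorProduct.map (hB.antipode ∘ₗ f) (f ∘ₗ hH.mul ∘ₗ hH.antipode.lTensor H)
        ∘ₗ hH.comul.lTensor H
      = TensorProduct.map (hB.antipode ∘ₗ f) (f ∘ₗ hH.counit.smulRight hH.unit) := by
    apply TensorProduct.ext'
    intro a b
    have hl := LinearMap.congr_fun lem1 b
    simp only [LinearMap.comp_apply] at hl
    simp [hl]
  have b6 : hB.mul ∘ₗ TensorProduct.map (hB.antipode ∘ₗ f) (f ∘ₗ hH.counit.smulRight hH.unit)
      = (hB.antipode ∘ₗ f) ∘ₗ (TensorProduct.rid R H).toLinearMap ∘ₗ hH.counit.lTensor H := by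
    apply TensorProduct.ext'
    intro a b
    simp [hunit, hB.mul_unit_right]
  -- the middle element
  ext x
  have eB : hB.mul ((TensorProduct.map hB.antipode hB.mul)
      ((TensorProduct.assoc R B B B) ((hB.comul.rTensor B)
        (TensorProduct.map f g (hH.comul x))))) = f (hH.antipode x) := by
    have h1 := LinearMap.congr_fun hB.antipode_lH₁ (TensorProduct.map f g (hH.comul x))
    have h2 := LinearMap.congr_fun a2 (hH.comul x)
    have h3 := LinearMap.congr_fun hH.counit_left x
    simp only [LinearMap.comp_apply, LinearEquiv.coe_coe, LinearMap.id_apply] at h1 h2 h3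
    rw [h1, h2, h3, hg]
    rfl
  have eA : hB.mul ((TensorProduct.map hB.antipode hB.mul)
      ((TensorProduct.assoc R B B B) ((hB.comul.rTensor B)
        (TensorProduct.map f g (hH.comul x))))) = hB.antipode (f x) := by
    have k1 := LinearMap.congr_fun b1 (hH.comul x)
    have k2 := LinearMap.congr_fun (TensorProduct.map_map_comp_assoc_eq f f g)
      ((hH.comul.rTensor H) (hH.comul x))
    have k3 := LinearMap.congr_fun hH.coassoc x
    have k4 := LinearMap.congr_fun b4 (hH.comul.lTensor H (hH.comul x))
    have k5 := LinearMap.congr_fun b5 (hH.comul x)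
    have k6 := LinearMap.congr_fun b6 (hH.comul x)
    have k7 := LinearMap.congr_fun hH.counit_right x
    simp only [LinearMap.comp_apply, LinearEquiv.coe_coe, LinearMap.id_apply] at k1 k2 k3 k4 k5 k6 k7
    rw [k1, ← k2, k3, k4, k5, k6, k7]
  simp only [LinearMap.comp_apply]
  rw [← eA, eB]
  rfl
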